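/- Let α > 0. For every ε > 0 there exist nonzero square-summable sequences a = (a_n)_{n≥1} and b = (b_n)_{n≥1} of nonnegative reals such that ∑_{m=1}^∞ ∑_{n=1}^∞ a_m b_n (mn)^{α−1/2} / max(m,n)^{2α} ≥ (ζ(1+2α) − ε) · ‖a‖_{ℓ²} ‖b‖_{ℓ²}. In other words, the norm of the bilinear form B_α on ℓ² × ℓ² is at least ζ(1+2α). -/

import Mathlib

/-!
Test `B_α` on the single sequence `a_n = n^{-(1/2+α)}`, whose squared `ℓ²` norm is
`ζ(1+2α)`. Then `a_m a_n (mn)^{α-1/2} / max(m,n)^{2α} = (mn)⁻¹ / max(m,n)^{2α}`, and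
`max(m,n) ≤ mn` bounds this term below by `(mn)^{-(1+2α)}`, so
`B_α(a,a) ≥ ζ(1+2α)² = ζ(1+2α) ‖a‖²`. The bound `mn ≤ max(m,n)²` dominates the same term by
`(mn)^{-(1+α)}`, which makes every series involved summable.
-/

open Real

theorem Summable.of_le_of_le {β : Type*} {l t w : β → ℝ} (hl : Summable l) (hw : Summable w)
    (hlt : ∀ b, l b ≤ t b) (htw : ∀ b, t b ≤ w b) : Summable t := by
  have hdiff : Summable fun b => t b - l b :=
    (hw.sub hl).of_nonneg_of_le (fun b => sub_nonneg.2 (hlt b)) fun b => by linarith [htw b]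
  simpa using hdiff.add hl

theorem tsum_mul_tsum_le_tsum_tsum {ι κ : Type*} {f u : ι → ℝ} {g v : κ → ℝ}
    {T : ι → κ → ℝ} (hf : Summable f) (hg : Summable g) (hu : Summable u) (hv : Summable v)
    (hlow : ∀ m n, f m * g n ≤ T m n) (hup : ∀ m n, T m n ≤ u m * v n) :
    (∑' m, f m) * (∑' n, g n) ≤ ∑' m, ∑' n, T m n := by
  have hrow : ∀ m, Summable (T m) := fun m =>
    (hg.mul_left (f m)).of_le_of_le (hv.mul_left (u m)) (hlow m) (hup m)
  have hrow_low : ∀ m, f m * ∑' n, g n ≤ ∑' n, T m n := fun m => by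
    rw [← tsum_mul_left]
    exact (hg.mul_left (f m)).tsum_le_tsum (hlow m) (hrow m)
  have hrow_up : ∀ m, ∑' n, T m n ≤ u m * ∑' n, v n := fun m => by
    rw [← tsum_mul_left]
    exact (hrow m).tsum_le_tsum (hup m) (hv.mul_left (u m))
  rw [← tsum_mul_right]
  exact (hf.mul_right _).tsum_le_tsum hrow_low
    ((hf.mul_right _).of_le_of_le (hu.mul_right _) hrow_low hrow_up)

theorem summable_pnat_rpow {p : ℝ} (hp : p < -1) : Summable fun n : ℕ+ => (n : ℝ) ^ p :=
  summable_pnat_iff_summable_nat.2 (Real.summable_nat_rpow.2 hp)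

theorem rpow_neg_one_add_eq_inv_div {z : ℝ} (hz : 0 < z) (s : ℝ) :
    z ^ (-(1 + s)) = z⁻¹ / z ^ s := by
  rw [neg_add, ← sub_eq_add_neg, rpow_sub hz, rpow_neg_one]

theorem max_le_mul_of_one_le_of_one_le {x y : ℝ} (hx : 1 ≤ x) (hy : 1 ≤ y) :
    max x y ≤ x * y :=
  max_le (le_mul_of_one_le_right (by linarith) hy) (le_mul_of_one_le_left (by linarith) hx)

noncomputable def testTerm (α x y : ℝ) : ℝ :=
  x ^ (-(1/2 + α)) * y ^ (-(1/2 + α)) * (x * y) ^ (α - 1/2) / max x y ^ (2 * α)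

section testTerm

variable {α x y : ℝ}

theorem testTerm_eq (hx : 0 < x) (hy : 0 < y) :
    testTerm α x y = (x * y)⁻¹ / max x y ^ (2 * α) := by
  rw [testTerm, ← mul_rpow hx.le hy.le, ← rpow_add (mul_pos hx hy), ← rpow_neg_one]
  ring_nf

theorem rpow_mul_rpow_le_testTerm (hα : 0 ≤ α) (hx : 1 ≤ x) (hy : 1 ≤ y) :
    x ^ (-(1 + 2 * α)) * y ^ (-(1 + 2 * α)) ≤ testTerm α x y := by
  have hx0 : 0 < x := by linarith
  have hy0 : 0 < y := by linarith
  rw [← mul_rpow hx0.le hy0.le, rpow_neg_one_add_eq_inv_div (mul_pos hx0 hy0), testTerm_eq hx0 hy0]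
  gcongr
  exact max_le_mul_of_one_le_of_one_le hx hy

theorem testTerm_le_rpow_mul_rpow (hα : 0 ≤ α) (hx : 0 < x) (hy : 0 < y) :
    testTerm α x y ≤ x ^ (-(1 + α)) * y ^ (-(1 + α)) := by
  have hxy : 0 < x * y := mul_pos hx hy
  have hmax : 0 < max x y := lt_max_of_lt_left hx
  have hmul_le_sq : x * y ≤ max x y * max x y :=
    mul_le_mul (le_max_left x y) (le_max_right x y) hy.le hmax.le
  have hmax_rpow : max x y ^ (2 * α) = (max x y * max x y) ^ α := by
    rw [mul_rpow hmax.le hmax.le, ← rpow_add hmax, two_mul]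
  rw [← mul_rpow hx.le hy.le, rpow_neg_one_add_eq_inv_div hxy, testTerm_eq hx hy, hmax_rpow]
  gcongr

end testTerm

theorem bilinear_form_lower_bound_zeta (α : ℝ) (hα : 0 < α) (ε : ℝ) (hε : 0 < ε) :
    ∃ a b : ℕ+ → ℝ, (∀ n, 0 ≤ a n) ∧ (∀ n, 0 ≤ b n) ∧
      (Summable fun n => a n ^ 2) ∧ (Summable fun n => b n ^ 2) ∧
      a ≠ 0 ∧ b ≠ 0 ∧
      ((∑' n : ℕ+, (n : ℝ) ^ (-(1+2*α))) - ε) *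
          (Real.sqrt (∑' n : ℕ+, a n ^ 2) * Real.sqrt (∑' n : ℕ+, b n ^ 2))
        ≤ ∑' (m : ℕ+) (n : ℕ+),
            a m * b n * ((m : ℝ) * (n : ℝ)) ^ (α - 1/2) / (max (m : ℝ) (n : ℝ)) ^ (2*α) := by
  set a : ℕ+ → ℝ := fun n => (n : ℝ) ^ (-(1/2 + α))
  set Z := ∑' n : ℕ+, (n : ℝ) ^ (-(1 + 2 * α))
  have hsq : ∀ n, a n ^ 2 = (n : ℝ) ^ (-(1 + 2 * α)) := fun n => by
    rw [← rpow_mul_natCast (Nat.cast_nonneg _)]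
    ring_nf
  have hZsum : Summable fun n : ℕ+ => (n : ℝ) ^ (-(1 + 2 * α)) := summable_pnat_rpow (by linarith)
  have hnorm_sq : ∑' n, a n ^ 2 = Z := tsum_congr hsq
  have hZ : 0 ≤ Z := tsum_nonneg fun n => rpow_nonneg (Nat.cast_nonneg _) _
  have hpos : ∀ n : ℕ+, 0 < a n := fun n => rpow_pos_of_pos (Nat.cast_pos.2 n.pos) _
  have hsummable : Summable fun n => a n ^ 2 := hZsum.congr fun n => (hsq n).symm
  have hne : a ≠ 0 := fun h => (hpos 1).ne' (congrFun h 1)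
  have hdouble : Z * Z ≤ ∑' (m : ℕ+) (n : ℕ+), testTerm α m n :=
    tsum_mul_tsum_le_tsum_tsum hZsum hZsum (summable_pnat_rpow (by linarith))
      (summable_pnat_rpow (by linarith))
      (fun m n => rpow_mul_rpow_le_testTerm hα.le (Nat.one_le_cast.2 m.pos)
        (Nat.one_le_cast.2 n.pos))
      (fun m n => testTerm_le_rpow_mul_rpow hα.le (Nat.cast_pos.2 m.pos) (Nat.cast_pos.2 n.pos))
  refine ⟨a, a, fun n => (hpos n).le, fun n => (hpos n).le, hsummable, hsummable, hne, hne, ?_⟩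
  rw [hnorm_sq, mul_self_sqrt hZ]
  calc (Z - ε) * Z ≤ Z * Z := mul_le_mul_of_nonneg_right (by linarith) hZ
    _ ≤ _ := hdouble
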